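/- Let Z ∈ ℝ^{n×q}, let H_1, …, H_{r−1} ∈ ℝ^{q×q} be symmetric matrices, and for v ∈ ℝ^r define Σ(v) = Z (Σ_{j=1}^{r−1} v_j H_j) Zᵀ + v_r I_n. Fix ψ ∈ ℝ^r such that Σ(ψ) is positive definite, and set A_j(ψ) = Σ(ψ)^{-1/2} Z H_j Zᵀ Σ(ψ)^{-1/2} for j ∈ {1, …, r−1} and A_r(ψ) = Σ(ψ)^{-1}. Let I(ψ) ∈ ℝ^{r×r} be the matrix with entries I(ψ)_{ij} = tr(A_i(ψ) A_j(ψ))/2. Then I(ψ) is positive definite if and only if Σ(v) ≠ 0 for every v ∈ ℝ^r with ‖v‖ = 1 (equivalently, the linear map v ↦ Σ(v) is injective). -/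

import Mathlib

/-!
With `R = Σ(ψ)^{1/2}` we have `A_r(ψ) = Σ(ψ)⁻¹ = R⁻¹ R⁻¹`, so `v ↦ ∑ v_j A_j(ψ)` is the linear map
`v ↦ R⁻¹ Σ(v) R⁻¹`. Hence `vᵀ I(ψ) v = tr(T²)/2` with `T = R⁻¹ Σ(v) R⁻¹` symmetric, i.e. half the
squared Frobenius norm of `T`, and this vanishes exactly when `Σ(v) = 0` since `R` is invertible.
-/

open Matrix

open Classical in
/-- The positive semidefinite square root of a matrix (junk value `0` off the
positive semidefinite matrices). -/
noncomputable def msqrt {ι : Type*} [Fintype ι] [DecidableEq ι] (M : Matrix ι ι ℝ) :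
    Matrix ι ι ℝ :=
  if h : M.PosSemidef then
    (h.1.eigenvectorUnitary : Matrix ι ι ℝ) * diagonal ((↑) ∘ (√·) ∘ h.1.eigenvalues) *
      (star (h.1.eigenvectorUnitary : Matrix ι ι ℝ))
  else 0

/-- `Σ(v) = Z (∑_{j<r} v_j H_j) Zᵀ + v_r I_n`, where the parameter has `r + 1`
coordinates, the first `r` multiplying the matrices `H_j` and the last multiplying
the identity. -/
noncomputable def SigmaMat {n q r : ℕ} (Z : Matrix (Fin n) (Fin q) ℝ)
    (H : Fin r → Matrix (Fin q) (Fin q) ℝ) (v : Fin (r + 1) → ℝ) :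
    Matrix (Fin n) (Fin n) ℝ :=
  Z * (∑ j, v j.castSucc • H j) * Zᵀ + v (Fin.last r) • 1

/-- `A_j(ψ) = Σ(ψ)^{-1/2} Z H_j Zᵀ Σ(ψ)^{-1/2}` for `j < r` and `A_r(ψ) = Σ(ψ)⁻¹`. -/
noncomputable def Aj {n q r : ℕ} (Z : Matrix (Fin n) (Fin q) ℝ)
    (H : Fin r → Matrix (Fin q) (Fin q) ℝ) (ψ : Fin (r + 1) → ℝ) (j : Fin (r + 1)) :
    Matrix (Fin n) (Fin n) ℝ :=
  Fin.lastCases (SigmaMat Z H ψ)⁻¹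
    (fun i => (msqrt (SigmaMat Z H ψ))⁻¹ * (Z * H i * Zᵀ) * (msqrt (SigmaMat Z H ψ))⁻¹) j

/-- The Fisher information matrix `I(ψ)_{ij} = tr(A_i(ψ) A_j(ψ))/2`. -/
noncomputable def infoMat {n q r : ℕ} (Z : Matrix (Fin n) (Fin q) ℝ)
    (H : Fin r → Matrix (Fin q) (Fin q) ℝ) (ψ : Fin (r + 1) → ℝ) :
    Matrix (Fin (r + 1)) (Fin (r + 1)) ℝ :=
  Matrix.of fun i j => (Aj Z H ψ i * Aj Z H ψ j).trace / 2

section MatrixSqrt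

variable {ι : Type*} [Fintype ι] [DecidableEq ι]

lemma msqrt_eq_cfc {M : Matrix ι ι ℝ} (hM : M.PosSemidef) : msqrt M = cfc Real.sqrt M := by
  rw [hM.1.cfc_eq, IsHermitian.cfc, Unitary.conjStarAlgAut_apply, msqrt, dif_pos hM]
  rfl

lemma isHermitian_msqrt (M : Matrix ι ι ℝ) : (msqrt M).IsHermitian := by
  by_cases hM : M.PosSemidef
  · rw [msqrt_eq_cfc hM]
    exact cfc_predicate Real.sqrt M
  · simp [msqrt, hM]

lemma msqrt_mul_self {M : Matrix ι ι ℝ} (hM : M.PosSemidef) : msqrt M * msqrt M = M := by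
  have hspec : ∀ x ∈ spectrum ℝ M, 0 ≤ x := by
    rw [hM.1.spectrum_real_eq_range_eigenvalues]
    rintro _ ⟨i, rfl⟩
    exact hM.eigenvalues_nonneg i
  rw [msqrt_eq_cfc hM, ← cfc_mul Real.sqrt Real.sqrt M]
  conv_rhs => rw [← cfc_id' ℝ M hM.1]
  exact cfc_congr fun x hx => Real.mul_self_sqrt (hspec x hx)

lemma isUnit_msqrt {M : Matrix ι ι ℝ} (hM : M.PosDef) : IsUnit (msqrt M) := by
  have h : IsUnit ((msqrt M).det * (msqrt M).det) := by
    rw [← det_mul, msqrt_mul_self hM.posSemidef]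
    exact hM.isUnit.map detMonoidHom
  exact (isUnit_iff_isUnit_det _).2 (isUnit_of_mul_isUnit_left h)

end MatrixSqrt

lemma Matrix.isHermitian_mul_mul_self {m α : Type*} [Fintype m] [NonUnitalSemiring α]
    [StarRing α] {P Q : Matrix m m α} (hP : P.IsHermitian) (hQ : Q.IsHermitian) :
    (P * Q * P).IsHermitian := by
  simpa only [hP.eq] using isHermitian_mul_mul_conjTranspose P hQ

lemma Matrix.posDef_smul_iff {m : Type*} [Fintype m] {M : Matrix m m ℝ} {c : ℝ} (hc : 0 < c) :
    (c • M).PosDef ↔ M.PosDef := by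
  refine ⟨fun h => ?_, fun h => h.smul hc⟩
  simpa [smul_smul, hc.ne'] using h.smul (inv_pos.2 hc)

lemma Matrix.IsHermitian.trace_mul_self_pos_iff {m : Type*} [Fintype m] {T : Matrix m m ℝ}
    (hT : T.IsHermitian) : 0 < (T * T).trace ↔ T ≠ 0 := by
  nth_rewrite 1 [← hT.eq]
  rw [(posSemidef_conjTranspose_mul_self T).trace_nonneg.lt_iff_ne', Ne, Ne,
    trace_conjTranspose_mul_self_eq_zero_iff]

def traceGram {ι m R : Type*} [Fintype m] [Mul R] [AddCommMonoid R] (A : ι → Matrix m m R) :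
    Matrix ι ι R :=
  of fun i j => (A i * A j).trace

section TraceGram

variable {ι m : Type*} [Fintype m]

lemma dotProduct_traceGram_mulVec [Fintype ι] {R : Type*} [CommSemiring R]
    (A : ι → Matrix m m R) (v : ι → R) :
    v ⬝ᵥ traceGram A *ᵥ v = ((∑ i, v i • A i) * (∑ i, v i • A i)).trace := by
  rw [Finset.sum_mul_sum, trace_sum]
  simp only [smul_mul_smul_comm, trace_sum, trace_smul, smul_eq_mul, dotProduct, mulVec,
    traceGram, of_apply, Finset.mul_sum]
  exact Finset.sum_congr rfl fun i _ => Finset.sum_congr rfl fun j _ => by ring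

lemma isHermitian_traceGram (A : ι → Matrix m m ℝ) : (traceGram A).IsHermitian := by
  ext i j
  exact trace_mul_comm _ _

lemma posDef_traceGram_iff [Fintype ι] {A : ι → Matrix m m ℝ} (hA : ∀ i, (A i).IsHermitian) :
    (traceGram A).PosDef ↔ ∀ v : ι → ℝ, v ≠ 0 → ∑ i, v i • A i ≠ 0 := by
  have hsum (v : ι → ℝ) : (∑ i, v i • A i).IsHermitian :=
    isSelfAdjoint_sum _ fun i _ => (hA i).smul (.all (v i))
  simp only [posDef_iff_dotProduct_mulVec, isHermitian_traceGram, true_and, star_trivial,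
    dotProduct_traceGram_mulVec, (hsum _).trace_mul_self_pos_iff]

end TraceGram

section FisherInformation

variable {n q r : ℕ} (Z : Matrix (Fin n) (Fin q) ℝ) (H : Fin r → Matrix (Fin q) (Fin q) ℝ)

lemma isHermitian_Aj (hH : ∀ j, (H j).IsSymm) {ψ : Fin (r + 1) → ℝ}
    (hψ : (SigmaMat Z H ψ).IsHermitian) (j : Fin (r + 1)) : (Aj Z H ψ j).IsHermitian := by
  induction j using Fin.lastCases with
  | last => simpa only [Aj, Fin.lastCases_last] using hψ.inv
  | cast i =>
    have hZHZ : (Z * H i * Zᵀ).IsHermitian := by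
      simpa only [conjTranspose_eq_transpose_of_trivial] using
        isHermitian_mul_mul_conjTranspose Z (isHermitian_iff_isSymm.2 (hH i))
    simpa only [Aj, Fin.lastCases_castSucc] using
      isHermitian_mul_mul_self (isHermitian_msqrt _).inv hZHZ

lemma sum_smul_Aj {ψ : Fin (r + 1) → ℝ} (hψ : (SigmaMat Z H ψ).PosSemidef)
    (v : Fin (r + 1) → ℝ) :
    ∑ j, v j • Aj Z H ψ j =
      (msqrt (SigmaMat Z H ψ))⁻¹ * SigmaMat Z H v * (msqrt (SigmaMat Z H ψ))⁻¹ := by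
  have hinv : (SigmaMat Z H ψ)⁻¹ =
      (msqrt (SigmaMat Z H ψ))⁻¹ * (msqrt (SigmaMat Z H ψ))⁻¹ := by
    rw [← Matrix.mul_inv_rev, msqrt_mul_self hψ]
  simp only [Fin.sum_univ_castSucc, Aj, Fin.lastCases_castSucc, Fin.lastCases_last]
  rw [hinv]
  simp only [SigmaMat, Matrix.mul_add, Matrix.add_mul, Matrix.mul_sum, Matrix.sum_mul,
    Matrix.mul_smul, Matrix.smul_mul, Matrix.mul_one, Matrix.mul_assoc]

lemma infoMat_eq_smul_traceGram (ψ : Fin (r + 1) → ℝ) :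
    infoMat Z H ψ = (2⁻¹ : ℝ) • traceGram (Aj Z H ψ) := by
  ext i j
  simp only [infoMat, traceGram, of_apply, Matrix.smul_apply, smul_eq_mul, div_eq_inv_mul]

end FisherInformation

/-- The Fisher information `I(ψ)` is positive definite if and only if the linear map
`v ↦ Σ(v)` is injective, i.e. `Σ(v) ≠ 0` for every `v ≠ 0` (equivalently, for every
unit vector `v`). -/
theorem stmt7 {n q r : ℕ} (Z : Matrix (Fin n) (Fin q) ℝ)
    (H : Fin r → Matrix (Fin q) (Fin q) ℝ) (hH : ∀ j, (H j).IsSymm)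
    (ψ : Fin (r + 1) → ℝ) (hψ : (SigmaMat Z H ψ).PosDef) :
    (infoMat Z H ψ).PosDef ↔ ∀ v : Fin (r + 1) → ℝ, v ≠ 0 → SigmaMat Z H v ≠ 0 := by
  have hRinv : IsUnit (msqrt (SigmaMat Z H ψ))⁻¹ := isUnit_nonsing_inv_iff.2 (isUnit_msqrt hψ)
  rw [infoMat_eq_smul_traceGram, posDef_smul_iff (by norm_num),
    posDef_traceGram_iff (isHermitian_Aj Z H hH hψ.1)]
  refine forall₂_congr fun v _ => ?_
  rw [sum_smul_Aj Z H hψ.posSemidef, Ne, Ne, hRinv.mul_left_eq_zero, hRinv.mul_right_eq_zero]
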